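/- Propagation condition 1 preserves the scope-stack invariant: if a vertex w holding a pathlet with scope stack σ = σ̄ ∘ (l) (σ̄ nonempty) forwards it to a neighbor n only when ¬(S(w) ⋈ S(n) ⊏ σ̄), and the pathlet was created at a vertex whose stack extends σ̄, then every vertex v that ever receives the pathlet satisfies σ̄ ⊑ S(v). -/
import Mathlib


def lcp {L : Type} [DecidableEq L] : List L → List L → List L
  | a :: as, b :: bs => if a = b then a :: lcp as bs else []
  | _, _ => []

def SPrefix {L : Type} (σ₁ σ₂ : List L) : Prop := ∃ τ : List L, τ ≠ [] ∧ σ₂ = σ₁ ++ τ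

lemma lcp_prefix_left {L : Type} [DecidableEq L] : ∀ a b : List L, lcp a b <+: a
  | a :: as, b :: bs => by
    by_cases h : a = b
    · simp [lcp, h]
      exact lcp_prefix_left as bs
    · simp [lcp, h]
  | [], _ => by simp [lcp]
  | _ :: _, [] => by simp [lcp]

lemma lcp_prefix_right {L : Type} [DecidableEq L] : ∀ a b : List L, lcp a b <+: b
  | a :: as, b :: bs => by
    by_cases h : a = b
    · simp [lcp, h]
      subst h; exact lcp_prefix_right as bs
    · simp [lcp, h]
  | [], _ => by simp [lcp]
  | _ :: _, [] => by simp [lcp]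

/-- Propagation condition 1 preserves the scope-stack invariant: if a pathlet
with scope stack `τ ∘ (l)` originates at `u` with `τ ⊑ S(u)` and is forwarded
along edges only when `¬(S(w) ⋈ S(n) ⊏ τ)`, then every vertex receiving it has
a stack extending `τ`. -/
theorem propagation_preserves_invariant {V L : Type} [DecidableEq L]
    (G : SimpleGraph V) (S : V → List L) (l₀ : L)
    (hS : ∀ v : V, ∃ t : List L, S v = l₀ :: t)
    (τ : List L) (l : L) (hτ : τ ≠ [])
    (u : V) (hu : τ <+: S u)
    (v : V) (w : ℕ → V) (k : ℕ)
    (h0 : w 0 = u) (hk : w k = v)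
    (hstep : ∀ i < k, G.Adj (w i) (w (i + 1)) ∧
      ¬ SPrefix (lcp (S (w i)) (S (w (i + 1)))) τ) :
    τ <+: S v := by
  subst hk
  have key : ∀ i ≤ k, τ <+: S (w i) := by
    intro i hi
    induction i with
    | zero => rw [h0]; exact hu
    | succ n ih =>
      have hn : τ <+: S (w n) := ih (Nat.le_of_succ_le hi)
      have hcond := (hstep n (Nat.lt_of_succ_le hi)).2
      have hl : lcp (S (w n)) (S (w (n+1))) <+: S (w n) := lcp_prefix_left _ _
      rcases (List.prefix_or_prefix_of_prefix hn hl) with h | h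
      · exact h.trans (lcp_prefix_right _ _)
      · rcases h with ⟨t, ht⟩
        rcases t with _ | ⟨a, t⟩
        · simp at ht
          exact ht ▸ lcp_prefix_right _ _
        · exact absurd ⟨a :: t, by simp, ht.symm⟩ hcond
  exact key k le_rfl
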